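/- arXiv:1303.0523 — 3 statements merged into one kernel-verified Lean document; each statement's English description precedes it below -/
import Mathlib

section
/- For every real ε > 0 and every integer t ≥ 1, there exists a finite connected graph G with 2t ≤ |V(G)| such that VR(G, t) < ε. -/
open SimpleGraph

variable {V : Type*}

/-- Distance from a vertex to a finite set of vertices (`⊤` if the set is empty). -/
noncomputable def distToSet (G : SimpleGraph V) (S : Finset V) (v : V) : ℕ∞ :=
  S.inf fun a => (G.dist a v : ℕ∞)

/-- Player A's Voronoi score. -/
noncomputable def scoreA [Fintype V] (G : SimpleGraph V) (A B : Finset V) : ℝ :=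
  ∑ v : V,
    if distToSet G A v < distToSet G B v then 1
    else if distToSet G A v = distToSet G B v then 1/2 else 0

/-- Player B's Voronoi score. -/
noncomputable def scoreB [Fintype V] (G : SimpleGraph V) (A B : Finset V) : ℝ :=
  ∑ v : V,
    if distToSet G B v < distToSet G A v then 1
    else if distToSet G B v = distToSet G A v then 1/2 else 0

/-- Minimax value (A's score under optimal play) of the Voronoi game with `t`
remaining rounds, given the sets of vertices already claimed by A and B. -/
noncomputable def gameValue [Fintype V] [DecidableEq V] (G : SimpleGraph V) :
    ℕ → Finset V → Finset V → ℝ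
  | 0, A, B => scoreA G A B
  | (t+1), A, B =>
      sSup {r : ℝ | ∃ a, a ∉ A ∧ a ∉ B ∧
        r = sInf {s : ℝ | ∃ b, b ∉ insert a A ∧ b ∉ B ∧
          s = gameValue G t (insert a A) (insert b B)}}

/-- The Voronoi ratio of `G` for a `t`-round game. -/
noncomputable def VR [Fintype V] [DecidableEq V] (G : SimpleGraph V) (t : ℕ) : ℝ :=
  gameValue G t ∅ ∅ / (Fintype.card V)

/-!
`VoronoiTrap.trapGraph m N` has junctions and mouths indexed by `ZMod m`, a path of length
`m + 1 + gap i j` from `junction i` to `mouth j` for all `i j`, and `N` leaves at every mouth.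
Moving from `junction i` to `junction (i - s)` shortens the way to `mouth k` by `s` whenever
`s ≤ gap i k`. So whatever vertex `a` player A claims, B can answer with one of the `2t + 1`
junctions `reply a s`, `3 ≤ s ≤ 2t + 3`, one of which is still free, and it is strictly closer than
`a` to the leaves of all mouths but at most `2t + 4`. After `t` rounds B is strictly closer at every
vertex except the non-leaf ones and the leaves of at most `t (2t + 4)` mouths. With `N` equal to the
number of non-leaf vertices, A's share is at most `(t (2t + 4) + 1) / (m + 1)`, which tends to `0`
as `m → ∞`.
-/

namespace SimpleGraph

variable {W : Type*} {G : SimpleGraph V} {H : SimpleGraph W}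

theorem Hom.edist_le (f : G →g H) (u v : V) : H.edist (f u) (f v) ≤ G.edist u v := by
  by_cases hr : G.Reachable u v
  · obtain ⟨w, hw⟩ := hr.exists_walk_length_eq_edist
    rw [← hw, ← Walk.length_map f]
    exact SimpleGraph.edist_le _
  · exact edist_eq_top_of_not_reachable hr ▸ le_top

theorem Iso.edist_eq (e : G ≃g H) (u v : V) : H.edist (e u) (e v) = G.edist u v :=
  le_antisymm (e.toHom.edist_le u v) <| by simpa using e.symm.toHom.edist_le (e u) (e v)

theorem Iso.dist_eq (e : G ≃g H) (u v : V) : H.dist (e u) (e v) = G.dist u v := by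
  rw [dist, dist, e.edist_eq]

theorem Reachable.le_add_dist {u v : V} (φ : V → ℕ) (hφ : ∀ ⦃x y⦄, G.Adj x y → φ x ≤ φ y + 1)
    (h : G.Reachable u v) : φ u ≤ φ v + G.dist u v := by
  obtain ⟨w, hw⟩ := h.exists_walk_length_eq_dist
  rw [← hw]
  clear hw h
  induction w with
  | nil => simp
  | @cons x y _ hadj _ ih =>
    have := hφ hadj
    rw [Walk.length_cons]
    omega

end SimpleGraph

theorem distToSet_lt_of_forall_exists {G : SimpleGraph V} {A B : Finset V} {v : V}
    (hA : A.Nonempty) (h : ∀ a ∈ A, ∃ b ∈ B, G.dist b v < G.dist a v) :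
    distToSet G B v < distToSet G A v := by
  have hle {b} (hb : b ∈ B) : distToSet G B v ≤ G.dist b v := Finset.inf_le hb
  obtain ⟨b, hb, -⟩ := h _ hA.choose_spec
  refine (Finset.lt_inf_iff ((hle hb).trans_lt (ENat.natCast_lt_top _))).2 fun a ha => ?_
  obtain ⟨b, hb, hlt⟩ := h a ha
  exact (hle hb).trans_lt (by exact_mod_cast hlt)

theorem scoreA_le_card [Fintype V] (G : SimpleGraph V) {A B S : Finset V}
    (h : ∀ v ∉ S, distToSet G B v < distToSet G A v) : scoreA G A B ≤ S.card := by
  let f : V → ℝ := fun v => if distToSet G A v < distToSet G B v then 1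
    else if distToSet G A v = distToSet G B v then 1/2 else 0
  have hzero (v) (hv : v ∉ S) : f v = 0 := by
    simp only [f, if_neg (h v hv).not_gt, if_neg (h v hv).ne']
  calc scoreA G A B = ∑ v ∈ S, f v :=
        (Finset.sum_subset (Finset.subset_univ S) fun v _ hv => hzero v hv).symm
    _ ≤ ∑ _v ∈ S, (1 : ℝ) := Finset.sum_le_sum fun v _ => by
        simp only [f]; split_ifs <;> norm_num
    _ = S.card := by simp

section Game

variable [Fintype V] [DecidableEq V]

theorem gameValue_le_of_invariant (G : SimpleGraph V) {M : ℝ} (hM : 0 ≤ M)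
    (P : ℕ → Finset V → Finset V → Prop) (hbase : ∀ A B, P 0 A B → scoreA G A B ≤ M)
    (hstep : ∀ k A B, P (k + 1) A B → ∀ a ∉ A, a ∉ B →
      ∃ b ∉ insert a A, b ∉ B ∧ P k (insert a A) (insert b B)) :
    ∀ k A B, P k A B → gameValue G k A B ≤ M
  | 0, A, B, h => hbase A B h
  | k + 1, A, B, h => by
    refine Real.sSup_le ?_ hM
    rintro _ ⟨a, haA, haB, rfl⟩
    obtain ⟨b, hbA, hbB, hP⟩ := hstep k A B h a haA haB
    have hfin : {s | ∃ b ∉ insert a A, b ∉ B ∧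
        s = gameValue G k (insert a A) (insert b B)}.Finite :=
      (Set.finite_range fun b => gameValue G k (insert a A) (insert b B)).subset <| by
        rintro _ ⟨b, -, -, rfl⟩
        exact ⟨b, rfl⟩
    exact (csInf_le hfin.bddBelow ⟨b, hbA, hbB, rfl⟩).trans
      (gameValue_le_of_invariant G hM P hbase hstep k _ _ hP)

variable {W : Type*} [Fintype W] [DecidableEq W]

theorem gameValue_comap_equiv (G : SimpleGraph V) (e : W ≃ V) :
    ∀ (k : ℕ) (A B : Finset W), gameValue (G.comap e) k A B =
      gameValue G k (A.map e.toEmbedding) (B.map e.toEmbedding)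
  | 0, A, B => by
    simp only [gameValue, scoreA, distToSet, Finset.inf_map]
    rw [← e.sum_comp]
    simp [← (Iso.comap e G).dist_eq, Function.comp_def]
  | k + 1, A, B => by
    simp only [gameValue, gameValue_comap_equiv G e k, Finset.map_insert,
      ← e.exists_congr_right, Finset.mem_insert, Finset.mem_map_equiv, Equiv.symm_apply_apply,
      EmbeddingLike.apply_eq_iff_eq, Equiv.coe_toEmbedding]

theorem VR_comap_equiv (G : SimpleGraph V) (e : W ≃ V) (t : ℕ) : VR (G.comap e) t = VR G t := by
  rw [VR, VR, gameValue_comap_equiv, Finset.map_empty, Fintype.card_congr e]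

end Game

namespace VoronoiTrap

variable {m N : ℕ}

def gap (i k : ZMod m) : ℕ := (i - k).val

/-- `⟨i, j, p⟩ : Σ i j, Fin (m + gap i j)` is the vertex at distance `p + 1` from `junction i` on
the path of length `m + 1 + gap i j` from `junction i` to `mouth j`. -/
abbrev Core (m : ℕ) : Type := (ZMod m ⊕ ZMod m) ⊕ Σ i j : ZMod m, Fin (m + gap i j)

abbrev Vtx (m N : ℕ) : Type := Core m ⊕ (ZMod m × Fin N)

def junction (i : ZMod m) : Vtx m N := .inl (.inl (.inl i))
def mouth (j : ZMod m) : Vtx m N := .inl (.inl (.inr j))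
def inner (i j : ZMod m) (p : Fin (m + gap i j)) : Vtx m N := .inl (.inr ⟨i, j, p⟩)
def leaf (j : ZMod m) (l : Fin N) : Vtx m N := .inr (j, l)

def Step : Vtx m N → Vtx m N → Prop
  | .inl (.inl (.inl i)), .inl (.inr ⟨i', _, p⟩) => i = i' ∧ p.val = 0
  | .inl (.inr ⟨i, j, p⟩), .inl (.inr ⟨i', j', q⟩) => i = i' ∧ j = j' ∧ q.val = p.val + 1
  | .inl (.inr ⟨i, j, p⟩), .inl (.inl (.inr j')) => j = j' ∧ p.val + 1 = m + gap i j
  | .inl (.inl (.inr j)), .inr (j', _) => j = j'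
  | _, _ => False

def trapGraph (m N : ℕ) : SimpleGraph (Vtx m N) where
  Adj u v := Step u v ∨ Step v u
  symm := ⟨fun _ _ => Or.symm⟩
  loopless := ⟨fun v h => by
    rcases v with ((_ | _) | ⟨_, _, _⟩) | _ <;> rcases h with h | h <;> simp only [Step] at h <;>
      omega⟩

def mouthPotential (k j : ZMod m) : ℕ := if j = k then 0 else 2 * m + 2

/-- A lower bound for the distance to `mouth k`: exact at the junctions, and `2m + 2` at the other
mouths, since a route from there to `mouth k` runs along two paths of length `> m`. -/
def potential (k : ZMod m) : Vtx m N → ℕ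
  | .inl (.inl (.inl i)) => m + 1 + gap i k
  | .inl (.inl (.inr j)) => mouthPotential k j
  | .inl (.inr ⟨i, j, p⟩) =>
      min (p.val + 1 + (m + 1 + gap i k)) (m + gap i j - p.val + mouthPotential k j)
  | .inr (j, _) => mouthPotential k j + 1

theorem potential_leaf_self (k : ZMod m) (l : Fin N) : potential k (leaf k l) = 1 := by
  simp [potential, leaf, mouthPotential]

theorem edist_le_one_of_step {u v : Vtx m N} (h : Step u v) : (trapGraph m N).edist u v ≤ 1 :=
  (edist_eq_one_iff_adj.2 (Or.inl h)).le

theorem edist_junction_inner (i j : ZMod m) : ∀ (p : ℕ) (hp : p < m + gap i j),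
    (trapGraph m N).edist (junction i) (inner i j ⟨p, hp⟩) ≤ (p + 1 : ℕ)
  | 0, _ => edist_le_one_of_step (by exact ⟨rfl, rfl⟩)
  | p + 1, hp => calc
      _ ≤ (trapGraph m N).edist (junction i) (inner i j ⟨p, by omega⟩) +
          (trapGraph m N).edist (inner i j ⟨p, by omega⟩) (inner i j ⟨p + 1, hp⟩) :=
        SimpleGraph.edist_triangle
      _ ≤ (p + 1 : ℕ) + 1 := by
        gcongr
        · exact edist_junction_inner i j p _
        · exact edist_le_one_of_step ⟨rfl, rfl, rfl⟩
      _ = (p + 1 + 1 : ℕ) := by norm_cast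

def home : Vtx m N → ZMod m
  | .inl (.inl (.inl i)) => i
  | .inl (.inl (.inr j)) => j
  | .inl (.inr ⟨i, _, _⟩) => i
  | .inr (j, _) => j

def target : Vtx m N → ZMod m
  | .inl (.inl (.inl i)) => i
  | .inl (.inl (.inr j)) => j
  | .inl (.inr ⟨_, j, _⟩) => j
  | .inr (j, _) => j

def reply (a : Vtx m N) (s : ℕ) : Vtx m N := junction (home a - s)

theorem exists_reply_notMem {t : ℕ} (hm : 2 * t + 3 < m) (a : Vtx m N) {T : Finset (Vtx m N)}
    (hT : T.card ≤ 2 * t) : ∃ s ∈ Finset.Icc 3 (2 * t + 3), reply a s ∉ T := by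
  have hinj : Set.InjOn (reply a) (Finset.Icc 3 (2 * t + 3)) := by
    intro s hs s' hs' h
    simp only [Finset.coe_Icc, Set.mem_Icc] at hs hs'
    simp only [reply, junction, Sum.inl.injEq, sub_right_inj, ZMod.natCast_eq_natCast_iff'] at h
    rwa [Nat.mod_eq_of_lt (by omega), Nat.mod_eq_of_lt (by omega)] at h
  obtain ⟨b, hb, hbT⟩ := Finset.exists_mem_notMem_of_card_lt_card (s := T)
    (t := (Finset.Icc 3 (2 * t + 3)).image (reply a))
    (by rw [Finset.card_image_of_injOn hinj, Nat.card_Icc]; omega)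
  obtain ⟨s, hs, rfl⟩ := Finset.mem_image.1 hb
  exact ⟨s, hs, hbT⟩

def ReplyInvariant (t k : ℕ) (A B : Finset (Vtx m N)) : Prop :=
  A.card = B.card ∧ A.card + k = t ∧ ∀ a ∈ A, ∃ s ∈ Finset.Icc 3 (2 * t + 3), reply a s ∈ B

theorem ReplyInvariant.exists_reply {t k : ℕ} (hm : 2 * t + 3 < m) {A B : Finset (Vtx m N)}
    (h : ReplyInvariant t (k + 1) A B) {a : Vtx m N} (haA : a ∉ A) :
    ∃ b ∉ insert a A, b ∉ B ∧ ReplyInvariant t k (insert a A) (insert b B) := by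
  obtain ⟨hcard, hround, hreply⟩ := h
  obtain ⟨s, hs, hfree⟩ := exists_reply_notMem hm a (T := insert a A ∪ B) <| by
    grw [Finset.card_union_le, Finset.card_insert_le]; omega
  rw [Finset.mem_union, not_or] at hfree
  refine ⟨reply a s, hfree.1, hfree.2, ?_, ?_, ?_⟩
  · rw [Finset.card_insert_of_notMem haA, Finset.card_insert_of_notMem hfree.2, hcard]
  · rw [Finset.card_insert_of_notMem haA]; omega
  · simp only [Finset.forall_mem_insert]
    exact ⟨⟨s, hs, Finset.mem_insert_self _ _⟩, fun a' ha' =>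
      (hreply a' ha').imp fun _ => And.imp_right Finset.mem_insert_of_mem⟩

variable [NeZero m]

theorem gap_lt (i k : ZMod m) : gap i k < m := ZMod.val_lt _

theorem gap_sub_natCast {i k : ZMod m} {s : ℕ} (h : s ≤ gap i k) :
    gap (i - (s : ZMod m)) k = gap i k - s := by
  have hs : (s : ZMod m).val = s := ZMod.val_natCast_of_lt (h.trans_lt (gap_lt i k))
  rw [gap, sub_right_comm, ZMod.val_sub (hs.trans_le h), hs, gap]

theorem gap_injective (i : ZMod m) : Function.Injective (gap i) := fun _ _ h =>
  sub_right_injective (ZMod.val_injective m h)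

theorem potential_le_of_step (k : ZMod m) {u v : Vtx m N} (h : Step u v) :
    potential k u ≤ potential k v + 1 ∧ potential k v ≤ potential k u + 1 := by
  rcases u with ((i | j) | ⟨i, j, p⟩) | ⟨j, l⟩ <;>
    rcases v with ((i' | j') | ⟨i', j', q⟩) | ⟨j', l'⟩ <;> simp only [Step] at h
  case inl.inl.inl.inl.inr =>
    obtain ⟨rfl, hq⟩ := h
    have := gap_lt i k
    simp only [potential, mouthPotential]
    split_ifs with hjk
    · subst hjk; omega
    · omega
  case inl.inl.inr.inr =>
    subst h
    simp only [potential]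
    omega
  case inl.inr.inl.inl.inr =>
    obtain ⟨rfl, hp⟩ := h
    have := gap_lt i k
    simp only [potential, mouthPotential]
    split_ifs with hjk
    · subst hjk; omega
    · omega
  case inl.inr.inl.inr =>
    obtain ⟨rfl, rfl, hq⟩ := h
    have := q.isLt
    simp only [potential]
    omega

theorem potential_le_of_adj (k : ZMod m) ⦃u v : Vtx m N⦄ (h : (trapGraph m N).Adj u v) :
    potential k u ≤ potential k v + 1 :=
  h.elim (fun h => (potential_le_of_step k h).1) fun h => (potential_le_of_step k h).2

theorem edist_junction_mouth (i j : ZMod m) :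
    (trapGraph m N).edist (junction i) (mouth j) ≤ (m + gap i j + 1 : ℕ) := by
  obtain ⟨p, hp⟩ : ∃ p, p + 1 = m + gap i j := ⟨m + gap i j - 1, by have := NeZero.pos m; omega⟩
  calc _ ≤ (trapGraph m N).edist (junction i) (inner i j ⟨p, by omega⟩) +
        (trapGraph m N).edist (inner i j ⟨p, by omega⟩) (mouth j) := SimpleGraph.edist_triangle
    _ ≤ (p + 1 : ℕ) + 1 := by
        gcongr
        · exact edist_junction_inner i j p _
        · exact edist_le_one_of_step ⟨rfl, hp⟩
    _ = (m + gap i j + 1 : ℕ) := by rw [hp]; norm_cast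

theorem edist_junction_leaf (i j : ZMod m) (l : Fin N) :
    (trapGraph m N).edist (junction i) (leaf j l) ≤ (m + gap i j + 2 : ℕ) := calc
  _ ≤ (trapGraph m N).edist (junction i) (mouth j) + (trapGraph m N).edist (mouth j) (leaf j l) :=
      SimpleGraph.edist_triangle
  _ ≤ (m + gap i j + 1 : ℕ) + 1 := by
      gcongr
      · exact edist_junction_mouth i j
      · exact edist_le_one_of_step (v := leaf j l) rfl
  _ = (m + gap i j + 2 : ℕ) := by norm_cast

theorem trapGraph_connected : (trapGraph m N).Connected := by
  have reach {u v : Vtx m N} {n : ℕ} (h : (trapGraph m N).edist u v ≤ n) :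
      (trapGraph m N).Reachable u v :=
    reachable_of_edist_ne_top (ne_top_of_le_ne_top (ENat.natCast_ne_top n) h)
  have hjunction (i : ZMod m) : (trapGraph m N).Reachable (junction 0) (junction i) :=
    (reach (edist_junction_mouth 0 0)).trans (reach (edist_junction_mouth i 0)).symm
  have hall (v : Vtx m N) : (trapGraph m N).Reachable (junction 0) v := by
    rcases v with ((i | j) | ⟨i, j, p⟩) | ⟨j, l⟩
    · exact hjunction i
    · exact reach (edist_junction_mouth 0 j)
    · exact (hjunction i).trans (reach (edist_junction_inner i j p p.isLt))
    · exact reach (edist_junction_leaf 0 j l)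
  exact (connected_iff _).2 ⟨fun u v => (hall u).symm.trans (hall v), ⟨junction 0⟩⟩

theorem potential_le_dist_leaf (k : ZMod m) (a : Vtx m N) (l : Fin N) :
    potential k a ≤ 1 + (trapGraph m N).dist a (leaf k l) := by
  simpa [potential_leaf_self] using Reachable.le_add_dist _ (potential_le_of_adj k)
    (trapGraph_connected.preconnected a (leaf k l))

def spoiled (r : ℕ) (a : Vtx m N) : Finset (ZMod m) :=
  insert (target a) (Finset.univ.filter (gap (home a) · < r))

theorem card_spoiled_le (r : ℕ) (a : Vtx m N) : (spoiled r a).card ≤ r + 1 := by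
  have : (Finset.univ.filter (gap (home a) · < r)).card ≤ r := by
    simpa using Finset.card_le_card_of_injOn (t := Finset.range r) (gap (home a))
      (fun k hk => by simpa using hk) (gap_injective _).injOn
  exact (Finset.card_insert_le _ _).trans (by omega)

theorem dist_reply_leaf_lt (a : Vtx m N) {r s : ℕ} (hs : 3 ≤ s) (hsr : s ≤ r) {k : ZMod m}
    (hk : k ∉ spoiled r a) (l : Fin N) :
    (trapGraph m N).dist (reply a s) (leaf k l) < (trapGraph m N).dist a (leaf k l) := by
  simp only [spoiled, Finset.mem_insert, Finset.mem_filter, Finset.mem_univ, true_and, not_or,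
    not_lt] at hk
  obtain ⟨hne, hfar⟩ := hk
  replace hne := Ne.symm hne
  have hupper : (trapGraph m N).dist (reply a s) (leaf k l) ≤ m + (gap (home a) k - s) + 2 := by
    rw [← gap_sub_natCast (by omega)]
    exact ENat.toNat_le_of_le_natCast (edist_junction_leaf _ k l)
  have hlower := potential_le_dist_leaf k a l
  have := gap_lt (home a) k
  rcases a with ((i | j) | ⟨i, j, p⟩) | ⟨j, l'⟩ <;>
    simp only [home, target] at hne hfar hupper this <;>
    simp only [potential, mouthPotential, hne, if_false, min_le_iff] at hlower
  case inl.inr => have := p.isLt; omega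
  all_goals omega

theorem scoreA_le_of_replyInvariant {t : ℕ} (ht : 1 ≤ t) {A B : Finset (Vtx m N)}
    (h : ReplyInvariant t 0 A B) :
    scoreA (trapGraph m N) A B ≤ Fintype.card (Core m) + t * (2 * t + 4) * N := by
  obtain ⟨-, hround, hreply⟩ := h
  have hA : A.Nonempty := Finset.card_pos.1 (by omega)
  set U := A.biUnion (spoiled (2 * t + 3))
  let S : Finset (Vtx m N) :=
    Finset.univ.map .inl ∪ (U ×ˢ (Finset.univ : Finset (Fin N))).map .inr
  have hS : ∀ v ∉ S, distToSet (trapGraph m N) B v < distToSet (trapGraph m N) A v := by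
    rintro (c | ⟨k, l⟩) hv
    · simp [S] at hv
    · have hk (a) (ha : a ∈ A) : k ∉ spoiled (2 * t + 3) a := fun hka =>
        hv <| Finset.mem_union_right _ <| Finset.mem_map_of_mem _ <|
          Finset.mem_product.2 ⟨Finset.mem_biUnion.2 ⟨a, ha, hka⟩, Finset.mem_univ l⟩
      refine distToSet_lt_of_forall_exists hA fun a ha => ?_
      obtain ⟨s, hs, hB⟩ := hreply a ha
      rw [Finset.mem_Icc] at hs
      exact ⟨reply a s, hB, dist_reply_leaf_lt a hs.1 hs.2 (hk a ha) l⟩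
  have hU : U.card ≤ t * (2 * t + 4) := by
    have hAt : A.card = t := by omega
    exact (Finset.card_biUnion_le_card_mul _ _ _ fun a _ => card_spoiled_le _ a).trans_eq
      (by rw [hAt])
  calc scoreA (trapGraph m N) A B ≤ S.card := scoreA_le_card _ hS
    _ ≤ (Fintype.card (Core m) + t * (2 * t + 4) * N : ℕ) := by
        gcongr
        grw [Finset.card_union_le, Finset.card_map, Finset.card_map, Finset.card_product, hU]
        simp
    _ = _ := by push_cast; ring

theorem gameValue_trapGraph_le {t : ℕ} (ht : 1 ≤ t) (hm : 2 * t + 3 < m) :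
    gameValue (trapGraph m N) t ∅ ∅ ≤ Fintype.card (Core m) + t * (2 * t + 4) * N :=
  gameValue_le_of_invariant _ (by positivity) (ReplyInvariant t)
    (fun _ _ h => scoreA_le_of_replyInvariant ht h)
    (fun _ _ _ h _ ha _ => h.exists_reply hm ha) t ∅ ∅ ⟨rfl, by simp, by simp⟩

theorem two_mul_le_card_core : 2 * m ≤ Fintype.card (Core m) := by
  simp only [Fintype.card_sum, ZMod.card]
  omega

theorem card_vtx : Fintype.card (Vtx m N) = Fintype.card (Core m) + m * N := by
  simp [Fintype.card_sum, ZMod.card]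

theorem VR_trapGraph_le {t : ℕ} (ht : 1 ≤ t) (hm : 2 * t + 3 < m) :
    VR (trapGraph m (Fintype.card (Core m))) t ≤ (t * (2 * t + 4) + 1) / (m + 1) := by
  set F := Fintype.card (Core m)
  have hF : 0 < F := by have := two_mul_le_card_core (m := m); have := NeZero.pos m; omega
  rw [VR, card_vtx, div_le_div_iff₀ (by positivity) (by positivity)]
  calc gameValue (trapGraph m F) t ∅ ∅ * (m + 1)
      ≤ (F + t * (2 * t + 4) * F) * (m + 1) := by
        gcongr
        exact_mod_cast gameValue_trapGraph_le ht hm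
    _ = (t * (2 * t + 4) + 1) * ((F + m * F : ℕ) : ℝ) := by push_cast; ring

end VoronoiTrap

open VoronoiTrap in
/-- For every real `ε > 0` and every integer `t ≥ 1`, there exists a finite
connected graph `G` with `2t ≤ |V(G)|` such that `VR(G, t) < ε`. -/
theorem voronoi_ratio_arbitrarily_small (ε : ℝ) (hε : 0 < ε) (t : ℕ) (ht : 1 ≤ t) :
    ∃ (n : ℕ) (G : SimpleGraph (Fin n)), G.Connected ∧ 2 * t ≤ n ∧ VR G t < ε := by
  set Q : ℝ := t * (2 * t + 4) + 1
  set m := 2 * t + 4 + ⌈Q / ε⌉₊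
  have : NeZero m := ⟨by omega⟩
  set F := Fintype.card (Core m)
  let e := (Fintype.equivFin (Vtx m F)).symm
  refine ⟨_, (trapGraph m F).comap e, (Iso.comap e _).connected_iff.2 trapGraph_connected, ?_, ?_⟩
  · have := two_mul_le_card_core (m := m)
    rw [card_vtx]
    omega
  · have hQ : Q < ε * (m + 1) := calc
      Q ≤ ⌈Q / ε⌉₊ * ε := (div_le_iff₀ hε).1 (Nat.le_ceil _)
      _ ≤ m * ε := by gcongr; exact_mod_cast Nat.le_add_left _ _
      _ < ε * (m + 1) := by linarith
    rw [VR_comap_equiv]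
    exact (VR_trapGraph_le ht (by omega)).trans_lt <| (div_lt_iff₀ (by positivity)).2 hQ
end

section
/- For every finite tree T with at least 2 vertices, VR(T, 1) ≥ 1/2. -/
/-!
A plays a median `a` of the tree, i.e. a vertex minimising `∑ v, dist a v`. Against a reply
`b ≠ a`, let `c` be the neighbour of `a` on the path to `b`. Since `ac` is a bridge, every vertex
at least as close to `b` as to `a` lies on `c`'s side of it, where `dist c v + 1 = dist a v`.
Moving from `a` to `c` changes each distance by at most one and lowers it on that side, so by
minimality of `a` that side holds at most half of the vertices, and A scores at least half.
-/

open SimpleGraph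

variable {V : Type*}

open Finset

namespace SimpleGraph

variable {G : SimpleGraph V}

theorem Walk.dist_add_dist_le_length [DecidableEq V] {u v w : V} (p : G.Walk u w)
    (hv : v ∈ p.support) : G.dist u v + G.dist v w ≤ p.length := by
  rw [← p.take_spec hv, Walk.length_append]
  exact add_le_add (dist_le _) (dist_le _)

theorem IsAcyclic.exists_adj_dist_add_one_eq (hacyc : G.IsAcyclic) (hconn : G.Connected)
    {a b : V} (hab : a ≠ b) :
    ∃ c, G.Adj a c ∧ ∀ v, G.dist b v ≤ G.dist a v → G.dist c v + 1 = G.dist a v := by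
  classical
  obtain ⟨p, hp⟩ := hconn.exists_walk_length_eq_dist a b
  cases p with
  | nil => exact absurd rfl hab
  | @cons _ c _ hac q =>
    refine ⟨c, hac, fun v hv => ?_⟩
    obtain ⟨P, hP⟩ := hconn.exists_walk_length_eq_dist a v
    obtain ⟨Q, hQ⟩ := hconn.exists_walk_length_eq_dist b v
    -- The edge `ac` is a bridge, so the walk `a ⇝ v ⇝ b ⇝ c` must use it.
    have hmem := isBridge_iff_forall_walk_mem_edges.mp
      (isAcyclic_iff_forall_adj_isBridge.mp hacyc hac) (P.append (Q.reverse.append q.reverse))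
    simp only [Walk.edges_append, Walk.edges_reverse, List.mem_append, List.mem_reverse] at hmem
    have hac1 : G.dist a c = 1 := dist_eq_one_iff_adj.mpr hac
    simp only [Walk.length_cons] at hp
    -- `Q` and `q` are too short to pass through `a`, so the bridge lies on `P`.
    rcases hmem with hP' | hQ' | hq'
    · have := P.dist_add_dist_le_length (P.snd_mem_support_of_mem_edges hP')
      have : G.dist a v ≤ G.dist a c + G.dist c v := hconn.dist_triangle
      omega
    · have := Q.dist_add_dist_le_length (Q.fst_mem_support_of_mem_edges hQ')
      have := hconn.pos_dist_of_ne hab.symm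
      omega
    · have := q.dist_add_dist_le_length (q.fst_mem_support_of_mem_edges hq')
      omega

theorem Connected.two_mul_card_le_of_sum_dist_le [Fintype V] (hconn : G.Connected) {a c : V}
    (hac : G.Adj a c) (hmin : ∑ v, G.dist a v ≤ ∑ v, G.dist c v) :
    2 * #{v | G.dist c v + 1 = G.dist a v} ≤ Fintype.card V := by
  have hterm : ∀ v, (G.dist c v : ℤ) - G.dist a v
      ≤ 1 - 2 * (if G.dist c v + 1 = G.dist a v then 1 else 0) := by
    intro v
    have : G.dist c v ≤ G.dist c a + G.dist a v := hconn.dist_triangle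
    rw [dist_eq_one_iff_adj.mpr hac.symm] at this
    split_ifs <;> omega
  have hsum := sum_le_sum fun v (_ : v ∈ univ) => hterm v
  simp only [sum_sub_distrib, ← mul_sum, sum_boole, sum_const, card_univ, nsmul_eq_mul,
    mul_one] at hsum
  have hmin' : ∑ v, (G.dist a v : ℤ) ≤ ∑ v, (G.dist c v : ℤ) := by exact_mod_cast hmin
  omega

theorem IsAcyclic.exists_forall_two_mul_card_le [Fintype V] [Nonempty V]
    (hacyc : G.IsAcyclic) (hconn : G.Connected) :
    ∃ a, ∀ b ≠ a, 2 * #{v | G.dist b v ≤ G.dist a v} ≤ Fintype.card V := by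
  obtain ⟨a, -, ha⟩ := exists_min_image univ (fun x => ∑ v, G.dist x v) univ_nonempty
  refine ⟨a, fun b hb => ?_⟩
  obtain ⟨c, hac, hc⟩ := hacyc.exists_adj_dist_add_one_eq hconn hb.symm
  calc 2 * #{v | G.dist b v ≤ G.dist a v}
      ≤ 2 * #{v | G.dist c v + 1 = G.dist a v} := by
        gcongr 2 * ?_
        exact card_le_card (monotone_filter_right _ fun v _ => hc v)
    _ ≤ Fintype.card V := hconn.two_mul_card_le_of_sum_dist_le hac (ha c (mem_univ c))

end SimpleGraph

section Score

variable [Fintype V] (G : SimpleGraph V)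

theorem scoreA_nonneg (A B : Finset V) : 0 ≤ scoreA G A B :=
  sum_nonneg fun v _ => by split_ifs <;> norm_num

theorem scoreA_le_card_s6 (A B : Finset V) : scoreA G A B ≤ Fintype.card V :=
  calc scoreA G A B ≤ ∑ _v : V, (1 : ℝ) := sum_le_sum fun v _ => by split_ifs <;> norm_num
    _ = Fintype.card V := by simp

theorem card_div_two_le_scoreA_singleton {a b : V}
    (h : 2 * #{v | G.dist b v ≤ G.dist a v} ≤ Fintype.card V) :
    (Fintype.card V : ℝ) / 2 ≤ scoreA G {a} {b} := by
  have hsplit := card_filter_add_card_filter_not (s := univ) fun v => G.dist b v ≤ G.dist a v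
  rw [card_univ] at hsplit
  have hhalf : (Fintype.card V : ℝ) / 2 ≤ #{v | ¬G.dist b v ≤ G.dist a v} := by
    rw [div_le_iff₀ two_pos]
    exact_mod_cast (by omega : Fintype.card V ≤ #{v | ¬G.dist b v ≤ G.dist a v} * 2)
  refine hhalf.trans ?_
  rw [← sum_boole]
  refine sum_le_sum fun v _ => ?_
  simp only [distToSet, inf_singleton, Nat.cast_lt, not_le]
  split_ifs <;> norm_num

end Score

theorem gameValue_one_empty [Fintype V] [DecidableEq V] (G : SimpleGraph V) :
    gameValue G 1 ∅ ∅ = ⨆ a, ⨅ b : {b // b ≠ a}, scoreA G {a} {(b : V)} := by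
  have hinner (a : V) : {s | ∃ b, ¬b = a ∧ s = scoreA G {a} {b}} =
      Set.range fun b : {b // b ≠ a} => scoreA G {a} {(b : V)} := by
    ext; simp [eq_comm]
  simp only [gameValue, iSup, iInf, Finset.notMem_empty, not_false_eq_true, true_and,
    insert_empty_eq, mem_singleton, ← hinner]
  congr 1; ext; simp [eq_comm]

theorem le_gameValue_one_empty [Fintype V] [DecidableEq V] [Nontrivial V] (G : SimpleGraph V)
    {x : ℝ} {a : V} (ha : ∀ b ≠ a, x ≤ scoreA G {a} {b}) : x ≤ gameValue G 1 ∅ ∅ := by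
  have (a' : V) : Nonempty {b // b ≠ a'} := nonempty_subtype.mpr (exists_ne a')
  have hbdd (a' : V) : BddBelow (Set.range fun b : {b // b ≠ a'} => scoreA G {a'} {(b : V)}) :=
    ⟨0, by rintro _ ⟨b, rfl⟩; exact scoreA_nonneg G _ _⟩
  rw [gameValue_one_empty]
  refine le_ciSup_of_le ⟨Fintype.card V, ?_⟩ a (le_ciInf fun b => ha b b.2)
  rintro _ ⟨a', rfl⟩
  obtain ⟨b, hb⟩ := exists_ne a'
  exact (ciInf_le (hbdd a') ⟨b, hb⟩).trans (scoreA_le_card_s6 G _ _)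

/-- For every finite tree `T` with at least 2 vertices, `VR(T, 1) ≥ 1/2`. -/
theorem vr_tree_one_round {V : Type*} [Fintype V] [DecidableEq V]
    (T : SimpleGraph V) (hconn : T.Connected) (hacyc : T.IsAcyclic)
    (h2 : 2 ≤ Fintype.card V) :
    (1 / 2 : ℝ) ≤ VR T 1 := by
  have : Nontrivial V := Fintype.one_lt_card_iff_nontrivial.mp h2
  obtain ⟨a, ha⟩ := hacyc.exists_forall_two_mul_card_le hconn
  have hval := le_gameValue_one_empty T fun b hb => card_div_two_le_scoreA_singleton T (ha b hb)
  have hcard : (0 : ℝ) < Fintype.card V := by exact_mod_cast Fintype.card_pos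
  rw [VR, le_div_iff₀ hcard]
  linarith
end

section
/- Let k ≥ 2 be an integer and let S_{k,N} be the spider graph obtained from the star with k leaves by replacing each leaf by a path with N vertices (so S_{k,N} has a center vertex with k attached legs, each leg a path on N vertices, and kN + 1 vertices in total). Then VR(S_{k,N}, 1) → 1 − 1/k as N → ∞; that is, for every ε > 0 there exists N₀ such that |VR(S_{k,N}, 1) − (1 − 1/k)| < ε for all N ≥ N₀. -/
open SimpleGraph

variable {V : Type*}

/-- The spider `S_{k,N}`: a center vertex (`none`) with `k` legs, each leg a path on `N`
vertices; `some (i, j)` is the vertex at position `j` (counted from the center) on leg `i`. -/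
def spider (k N : ℕ) : SimpleGraph (Option (Fin k × Fin N)) :=
  SimpleGraph.fromRel (fun u v =>
    (∃ (i : Fin k) (j : Fin N), u = none ∧ v = some (i, j) ∧ (j : ℕ) = 0) ∨
    (∃ (i : Fin k) (j j' : Fin N), u = some (i, j) ∧ v = some (i, j') ∧ (j : ℕ) + 1 = j'))

/-! In the one-round game on `S_{k,N}`, A claims the centre. Whatever B then claims lies on some
leg, and B wins at most the `N` vertices of that leg, exactly `N` if it claims the leg's first
vertex. If A claims a leg vertex instead, B answers with the centre and A wins at most that leg.
So A's optimal score is `kN + 1 - N` and `VR(S_{k,N}, 1) = 1 - 1/k + 1/(k(kN + 1))`.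

Distances in the spider are pinned down by exhibiting walks along the legs and matching their
lengths with a lower bound from the signed depth, a potential that changes by at most one along
each edge. -/

namespace SimpleGraph

variable {W : Type*} {G : SimpleGraph W}

theorem Walk.abs_sub_le_length {f : W → ℤ} (hf : ∀ u v, G.Adj u v → |f u - f v| ≤ 1)
    {u v : W} (p : G.Walk u v) : |f u - f v| ≤ p.length := by
  induction p with
  | nil => simp
  | @cons a b c h q ih =>
    calc |f a - f c| ≤ |f a - f b| + |f b - f c| := abs_sub_le _ _ _
      _ ≤ 1 + q.length := add_le_add (hf _ _ h) ih
      _ = (q.cons h).length := by rw [Walk.length_cons]; push_cast; ring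

theorem Walk.dist_eq_length_of_length_eq_abs_sub {f : W → ℤ}
    (hf : ∀ u v, G.Adj u v → |f u - f v| ≤ 1) {u v : W} (p : G.Walk u v)
    (hp : (p.length : ℤ) = |f u - f v|) : G.dist u v = p.length := by
  obtain ⟨q, hq⟩ := p.reachable.exists_walk_length_eq_dist
  have := q.abs_sub_le_length hf
  have := G.dist_le p
  omega

theorem distToSet_singleton (a v : W) : distToSet G {a} v = G.dist a v :=
  Finset.inf_singleton

variable [Fintype W]

theorem scoreA_add_scoreA_swap (A B : Finset W) :
    scoreA G A B + scoreA G B A = Fintype.card W := by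
  rw [scoreA, scoreA, ← Finset.sum_add_distrib, ← Finset.card_univ, Finset.card_eq_sum_ones,
    Nat.cast_sum]
  refine Finset.sum_congr rfl fun v _ => ?_
  rcases lt_trichotomy (distToSet G A v) (distToSet G B v) with h | h | h
  · simp [h, h.not_gt, h.ne']
  · norm_num [h]
  · simp [h, h.not_gt, h.ne']

theorem scoreA_le_card_of_lt {A B : Finset W} (S : Finset W)
    (h : ∀ v ∉ S, distToSet G B v < distToSet G A v) : scoreA G A B ≤ S.card := by
  classical
  calc scoreA G A B ≤ ∑ v, if v ∈ S then (1 : ℝ) else 0 := by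
        refine Finset.sum_le_sum fun v _ => ?_
        by_cases hv : v ∈ S
        · simp only [hv, if_true]; split_ifs <;> norm_num
        · have := h v hv
          simp [hv, this.not_gt, this.ne']
    _ = S.card := by simp

theorem card_le_scoreA_of_lt {A B : Finset W} (S : Finset W)
    (h : ∀ v ∈ S, distToSet G A v < distToSet G B v) : S.card ≤ scoreA G A B := by
  classical
  calc (S.card : ℝ) = ∑ v, if v ∈ S then (1 : ℝ) else 0 := by simp
    _ ≤ scoreA G A B := by
        refine Finset.sum_le_sum fun v _ => ?_
        by_cases hv : v ∈ S
        · simp [hv, h v hv]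
        · simp only [hv, if_false]; split_ifs <;> norm_num

variable [DecidableEq W]

theorem gameValue_one_empty_eq {M : ℝ} {a₀ b₀ : W} (hb₀ : b₀ ≠ a₀)
    (h₀ : scoreA G {a₀} {b₀} = M) (hA : ∀ b ≠ a₀, M ≤ scoreA G {a₀} {b})
    (hB : ∀ a, ∃ b ≠ a, scoreA G {a} {b} ≤ M) : gameValue G 1 ∅ ∅ = M := by
  simp only [gameValue, Finset.notMem_empty, not_false_eq_true, Finset.insert_empty,
    Finset.mem_singleton, true_and]
  have hbdd : ∀ a, BddBelow {s | ∃ b, b ≠ a ∧ s = scoreA G {a} {b}} := fun a =>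
    ((Set.finite_range fun b => scoreA G {a} {b}).subset
      (by rintro _ ⟨b, -, rfl⟩; exact ⟨b, rfl⟩)).bddBelow
  have hmin : sInf {s | ∃ b, b ≠ a₀ ∧ s = scoreA G {a₀} {b}} = M :=
    IsLeast.csInf_eq ⟨⟨b₀, hb₀, h₀.symm⟩, by rintro _ ⟨b, hb, rfl⟩; exact hA b hb⟩
  refine IsGreatest.csSup_eq ⟨⟨a₀, hmin.symm⟩, ?_⟩
  rintro r ⟨a, rfl⟩
  obtain ⟨b, hb, hbM⟩ := hB a
  exact (csInf_le (hbdd a) ⟨b, hb, rfl⟩).trans hbM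

end SimpleGraph

namespace Spider

variable {k N : ℕ}

theorem adj_none_some (i : Fin k) (j : Fin N) (hj : (j : ℕ) = 0) :
    (spider k N).Adj none (some (i, j)) := by
  rw [spider, fromRel_adj]
  exact ⟨by simp, Or.inl (Or.inl ⟨i, j, rfl, rfl, hj⟩)⟩

theorem adj_some_some (i : Fin k) (j j' : Fin N) (h : (j : ℕ) + 1 = j') :
    (spider k N).Adj (some (i, j)) (some (i, j')) := by
  rw [spider, fromRel_adj]
  refine ⟨fun heq => ?_, Or.inl (Or.inr ⟨i, j, j', rfl, rfl, h⟩)⟩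
  simp only [Option.some_inj, Prod.mk.injEq, true_and] at heq
  omega

def signedDepth (i₀ : Fin k) : Option (Fin k × Fin N) → ℤ
  | none => 0
  | some (i, j) => if i = i₀ then j + 1 else -(j + 1)

theorem abs_signedDepth_sub_le_one (i₀ : Fin k) (u v : Option (Fin k × Fin N))
    (h : (spider k N).Adj u v) : |signedDepth i₀ u - signedDepth i₀ v| ≤ 1 := by
  rw [spider, fromRel_adj] at h
  obtain ⟨-, (⟨i, j, rfl, rfl, hj⟩ | ⟨i, j, j', rfl, rfl, hj⟩) |
    (⟨i, j, rfl, rfl, hj⟩ | ⟨i, j, j', rfl, rfl, hj⟩)⟩ := h <;>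
  simp only [signedDepth] <;> split_ifs <;> rw [abs_le] <;> omega

theorem exists_walk_some_some (i : Fin k) (j : Fin N) (p : ℕ) (hjp : (j : ℕ) ≤ p)
    (hp : p < N) : ∃ q : (spider k N).Walk (some (i, j)) (some (i, ⟨p, hp⟩)),
      q.length = p - j := by
  induction p, hjp using Nat.le_induction with
  | base => exact ⟨Walk.nil, by simp⟩
  | succ p hjp ih =>
    obtain ⟨q, hq⟩ := ih (by omega)
    exact ⟨q.concat (adj_some_some i ⟨p, by omega⟩ ⟨p + 1, hp⟩ rfl), by
      rw [Walk.length_concat, hq]; omega⟩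

theorem exists_walk_none_some (i : Fin k) (j : Fin N) :
    ∃ q : (spider k N).Walk none (some (i, j)), q.length = j + 1 := by
  obtain ⟨q, hq⟩ := exists_walk_some_some i ⟨0, j.pos⟩ j (Nat.zero_le _) j.isLt
  exact ⟨q.cons (adj_none_some i _ rfl), by rw [Walk.length_cons, hq]; simp⟩

theorem dist_none_some (i : Fin k) (j : Fin N) :
    (spider k N).dist none (some (i, j)) = j + 1 := by
  obtain ⟨q, hq⟩ := exists_walk_none_some i j
  rw [q.dist_eq_length_of_length_eq_abs_sub (abs_signedDepth_sub_le_one i)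
    (by simp [signedDepth, hq, abs_eq_max_neg]; omega), hq]

theorem dist_some_some_of_le (i : Fin k) {j p : Fin N} (h : j ≤ p) :
    (spider k N).dist (some (i, j)) (some (i, p)) = p - j := by
  obtain ⟨q, hq⟩ := exists_walk_some_some i j p h p.isLt
  rw [q.dist_eq_length_of_length_eq_abs_sub (abs_signedDepth_sub_le_one i)
    (by simp [signedDepth, hq, abs_eq_max_neg]; omega), hq]

theorem dist_some_some_of_ne {i i' : Fin k} (hi : i ≠ i') (j p : Fin N) :
    (spider k N).dist (some (i, j)) (some (i', p)) = j + p + 2 := by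
  obtain ⟨q, hq⟩ := exists_walk_none_some i j
  obtain ⟨q', hq'⟩ := exists_walk_none_some i' p
  rw [(q.reverse.append q').dist_eq_length_of_length_eq_abs_sub (abs_signedDepth_sub_le_one i)
    (by simp [signedDepth, hq, hq', hi.symm, abs_eq_max_neg]; omega)]
  simp [hq, hq']
  omega

def leg (i : Fin k) : Finset (Option (Fin k × Fin N)) :=
  Finset.univ.map ⟨fun j => some (i, j), fun _ _ h => by simpa using h⟩

theorem mem_leg {i : Fin k} {v : Option (Fin k × Fin N)} :
    v ∈ leg i ↔ ∃ j, some (i, j) = v := by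
  simp only [leg, Finset.mem_map, Finset.mem_univ, true_and]
  rfl

theorem card_leg (i : Fin k) : (leg (N := N) i).card = N := by
  simp [leg]

theorem dist_none_lt_of_notMem_leg {i : Fin k} (j : Fin N) {v : Option (Fin k × Fin N)}
    (hv : v ∉ leg i) : (spider k N).dist none v < (spider k N).dist (some (i, j)) v := by
  match v with
  | none => simp [dist_comm, dist_none_some]
  | some (i', p) =>
    have hi : i ≠ i' := by rintro rfl; exact hv (mem_leg.2 ⟨p, rfl⟩)
    rw [dist_none_some, dist_some_some_of_ne hi]
    omega

theorem dist_some_lt_of_mem_leg (hN : 0 < N) {i : Fin k} {v : Option (Fin k × Fin N)}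
    (hv : v ∈ leg i) :
    (spider k N).dist (some (i, ⟨0, hN⟩)) v < (spider k N).dist none v := by
  obtain ⟨p, rfl⟩ := mem_leg.1 hv
  rw [dist_none_some, dist_some_some_of_le i (Nat.zero_le _)]
  omega

theorem scoreA_some_none_le (i : Fin k) (j : Fin N) :
    scoreA (spider k N) {some (i, j)} {none} ≤ N := by
  refine (scoreA_le_card_of_lt (leg i) fun v hv => ?_).trans_eq (by rw [card_leg])
  simpa [distToSet_singleton] using dist_none_lt_of_notMem_leg j hv

theorem le_scoreA_some_none (hN : 0 < N) (i : Fin k) :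
    N ≤ scoreA (spider k N) {some (i, ⟨0, hN⟩)} {none} := by
  refine (card_le_scoreA_of_lt (leg i) fun v hv => ?_).trans_eq' (by rw [card_leg])
  simpa [distToSet_singleton] using dist_some_lt_of_mem_leg hN hv

theorem card_vertices : Fintype.card (Option (Fin k × Fin N)) = k * N + 1 := by
  simp

theorem scoreA_none_add_scoreA_some (i : Fin k) (j : Fin N) :
    scoreA (spider k N) {none} {some (i, j)} + scoreA (spider k N) {some (i, j)} {none} =
      k * N + 1 := by
  rw [scoreA_add_scoreA_swap, card_vertices]
  push_cast; ring

theorem gameValue_one (hk : 2 ≤ k) (hN : 0 < N) :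
    gameValue (spider k N) 1 ∅ ∅ = k * N + 1 - N := by
  have hk' : (2 : ℝ) ≤ k := by exact_mod_cast hk
  have hNk : (N : ℝ) ≤ k * N + 1 - N := by nlinarith
  let i₀ : Fin k := ⟨0, by omega⟩
  have h₀ : scoreA (spider k N) {none} {some (i₀, ⟨0, hN⟩)} = k * N + 1 - N := by
    have := scoreA_none_add_scoreA_some i₀ ⟨0, hN⟩
    have := le_scoreA_some_none hN i₀
    have := scoreA_some_none_le i₀ ⟨0, hN⟩
    linarith
  refine gameValue_one_empty_eq (by simp) h₀ ?_ ?_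
  · rintro (_ | ⟨i, j⟩) hb
    · exact absurd rfl hb
    · have := scoreA_none_add_scoreA_some i j
      have := scoreA_some_none_le i j
      linarith
  · rintro (_ | ⟨i, j⟩)
    · exact ⟨_, by simp, h₀.le⟩
    · exact ⟨none, by simp, (scoreA_some_none_le i j).trans hNk⟩

theorem vr_one (hk : 2 ≤ k) (hN : 0 < N) :
    VR (spider k N) 1 = 1 - 1 / k + 1 / (k * (k * N + 1)) := by
  rw [VR, gameValue_one hk hN, card_vertices]
  push_cast
  field_simp
  ring

end Spider

/-- For every `k ≥ 2`, `VR(S_{k,N}, 1) → 1 − 1/k` as `N → ∞`. -/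
theorem vr_spider_tendsto (k : ℕ) (hk : 2 ≤ k) (ε : ℝ) (hε : 0 < ε) :
    ∃ N₀ : ℕ, ∀ N : ℕ, N₀ ≤ N → |VR (spider k N) 1 - (1 - 1 / (k : ℝ))| < ε := by
  obtain ⟨n, hn⟩ := exists_nat_one_div_lt hε
  refine ⟨n + 1, fun N hN => ?_⟩
  have hk' : (2 : ℝ) ≤ k := by exact_mod_cast hk
  have hN' : (n : ℝ) + 1 ≤ N := by exact_mod_cast hN
  rw [Spider.vr_one hk (by omega), add_sub_cancel_left, abs_of_pos (by positivity)]
  calc 1 / (k * (k * N + 1) : ℝ) ≤ 1 / (n + 1) := by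
        gcongr
        calc (n : ℝ) + 1 ≤ N := hN'
          _ ≤ k * N + 1 := by nlinarith
          _ ≤ k * (k * N + 1) := le_mul_of_one_le_left (by positivity) (by linarith)
    _ < ε := hn
end
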